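/- The connected component of the Kronecker product ℤ₊ ×_K ℤ containing (0,0) is graph-isomorphic to the restricted lattice L{(x,y) ∈ ℤ² : x ≥ y}, with the origin mapped to the origin. -/

import Mathlib

def SimpleGraph.kron {V₁ V₂ : Type*} (G₁ : SimpleGraph V₁) (G₂ : SimpleGraph V₂) :
    SimpleGraph (V₁ × V₂) where
  Adj p q := G₁.Adj p.1 q.1 ∧ G₂.Adj p.2 q.2
  symm := ⟨fun _ _ h => ⟨h.1.symm, h.2.symm⟩⟩
  loopless := ⟨fun p h => G₁.ne_of_adj h.1 rfl⟩

/-- The one-dimensional integer lattice: `x ∼ y` iff `|x - y| = 1`. -/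
def latZ : SimpleGraph ℤ where
  Adj x y := |x - y| = 1
  symm := by constructor; intro x y h; exact (abs_sub_comm y x).trans h
  loopless := by constructor; intro x h; simp at h

/-- The half-line graph on `ℕ = {0,1,2,...}`: `x ∼ y` iff `|x - y| = 1`. -/
def latN : SimpleGraph ℕ where
  Adj x y := |(x : ℤ) - y| = 1
  symm := by constructor; intro x y h; exact (abs_sub_comm (y : ℤ) x).trans h
  loopless := by constructor; intro x h; simp at h

/-- The connected component of `G` containing `o`, as the induced subgraph on the
set of vertices reachable from `o`. -/
def component {V : Type*} (G : SimpleGraph V) (o : V) : SimpleGraph {v // G.Reachable o v} :=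
  G.induce {v | G.Reachable o v}

/-!
A diagonal step of `ℤ₊ ×_K ℤ` changes both coordinates by `±1`, so the parity of `u + v` is
invariant; conversely every `(u, v)` with `u + v` even is reached from `(0, 0)` by going up the
diagonal to `(u, u)` and then zig-zagging vertically in steps of `2`. Hence the component of the
origin is `{(u, v) : u ≥ 0, u + v even}`, and the rotation `(x, y) ↦ (x - y, x + y)` maps the
half-plane `x ≥ y` bijectively onto it, turning lattice edges into diagonal ones.
-/

lemma latZ_adj_iff {a b : ℤ} : latZ.Adj a b ↔ b = a + 1 ∨ a = b + 1 := by
  change |a - b| = 1 ↔ _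
  rw [abs_eq zero_le_one]
  omega

lemma latN_adj_iff {m n : ℕ} : latN.Adj m n ↔ latZ.Adj m n := Iff.rfl

lemma SimpleGraph.kron_adj {V₁ V₂ : Type*} {G₁ : SimpleGraph V₁} {G₂ : SimpleGraph V₂}
    {p q : V₁ × V₂} : (G₁.kron G₂).Adj p q ↔ G₁.Adj p.1 q.1 ∧ G₂.Adj p.2 q.2 :=
  Iff.rfl

lemma even_add_iff_of_reachable {p q : ℕ × ℤ} (h : (latN.kron latZ).Reachable p q) :
    Even ((p.1 : ℤ) + p.2) ↔ Even ((q.1 : ℤ) + q.2) := by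
  obtain ⟨w⟩ := h
  induction w with
  | nil => rfl
  | cons hadj _ ih =>
    obtain ⟨hu, hv⟩ := hadj
    rw [← ih]
    rw [latN_adj_iff, latZ_adj_iff] at hu
    rw [latZ_adj_iff] at hv
    simp only [Int.even_iff]
    omega

lemma reachable_up_right (u : ℕ) (v : ℤ) :
    (latN.kron latZ).Reachable (u, v) (u + 1, v + 1) :=
  SimpleGraph.Adj.reachable <| by
    rw [SimpleGraph.kron_adj, latN_adj_iff, latZ_adj_iff, latZ_adj_iff]; push_cast; omega

lemma reachable_add_two (u : ℕ) (v : ℤ) : (latN.kron latZ).Reachable (u, v) (u, v + 2) := by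
  have down_right : (latN.kron latZ).Adj (u + 1, v + 1) (u, v + 2) := by
    rw [SimpleGraph.kron_adj, latN_adj_iff, latZ_adj_iff, latZ_adj_iff]; push_cast; omega
  exact (reachable_up_right u v).trans down_right.reachable

lemma reachable_add_two_mul (u : ℕ) (v k : ℤ) :
    (latN.kron latZ).Reachable (u, v) (u, v + 2 * k) := by
  induction k using Int.induction_on with
  | zero => simp
  | succ n ih => simpa [mul_add, ← add_assoc] using ih.trans (reachable_add_two u _)
  | pred n ih =>
    have back := reachable_add_two u (v + 2 * (-n - 1))
    rw [show v + 2 * (-n - 1) + 2 = v + 2 * -n by ring] at back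
    exact ih.trans back.symm

lemma reachable_diag (u : ℕ) : (latN.kron latZ).Reachable (0, 0) (u, u) := by
  induction u with
  | zero => rfl
  | succ n ih => simpa using ih.trans (reachable_up_right n n)

lemma reachable_zero_iff {u : ℕ} {v : ℤ} :
    (latN.kron latZ).Reachable (0, 0) (u, v) ↔ Even ((u : ℤ) + v) := by
  refine ⟨fun h => (even_add_iff_of_reachable h).1 (by simp), fun h => ?_⟩
  obtain ⟨k, hk⟩ : ∃ k, v = u + 2 * k := ⟨(v - u) / 2, by rw [Int.even_iff] at h; omega⟩
  exact hk ▸ (reachable_diag u).trans (reachable_add_two_mul u u k)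

lemma boxProd_adj_iff_kron_adj_rotate {p q : ℤ × ℤ} :
    (latZ □ latZ).Adj p q ↔
      (latZ.kron latZ).Adj (p.1 - p.2, p.1 + p.2) (q.1 - q.2, q.1 + q.2) := by
  change ((latZ.Adj _ _ ∧ _) ∨ (latZ.Adj _ _ ∧ _)) ↔ latZ.Adj _ _ ∧ latZ.Adj _ _
  simp only [latZ_adj_iff]
  omega

def halfPlaneIsoComponent :
    (latZ □ latZ).induce {p : ℤ × ℤ | p.2 ≤ p.1} ≃g
      component (latN.kron latZ) (0, 0) where
  toFun p := ⟨((p.1.1 - p.1.2).toNat, p.1.1 + p.1.2), reachable_zero_iff.2 <| by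
    have : p.1.2 ≤ p.1.1 := p.2
    rw [Int.even_iff, Int.toNat_of_nonneg (by omega)]; omega⟩
  invFun v := ⟨((v.1.1 + v.1.2) / 2, (v.1.2 - v.1.1) / 2), by
    have : Even ((v.1.1 : ℤ) + v.1.2) := reachable_zero_iff.1 v.2
    rw [Int.even_iff] at this
    change (_ : ℤ) / 2 ≤ _ / 2; omega⟩
  left_inv p := by
    have : p.1.2 ≤ p.1.1 := p.2
    ext <;> dsimp only <;> omega
  right_inv v := by
    obtain ⟨⟨u, v⟩, h⟩ := v
    have := Int.even_iff.1 (reachable_zero_iff.1 h)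
    ext <;> dsimp only <;> omega
  map_rel_iff' {p q} := by
    have hp : p.1.2 ≤ p.1.1 := p.2
    have hq : q.1.2 ≤ q.1.1 := q.2
    change latZ.Adj ((p.1.1 - p.1.2).toNat : ℤ) (q.1.1 - q.1.2).toNat ∧
      latZ.Adj (p.1.1 + p.1.2) (q.1.1 + q.1.2) ↔ (latZ □ latZ).Adj p.1 q.1
    rw [Int.toNat_of_nonneg (by omega), Int.toNat_of_nonneg (by omega),
      boxProd_adj_iff_kron_adj_rotate]
    rfl

theorem component_kronNZ_iso_xgey :
    ∃ φ : component (latN.kron latZ) (0, 0) ≃g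
        (latZ □ latZ).induce {p : ℤ × ℤ | p.2 ≤ p.1},
      φ ⟨(0, 0), SimpleGraph.Reachable.refl _⟩ = ⟨(0, 0), by simp⟩ :=
  ⟨halfPlaneIsoComponent.symm, halfPlaneIsoComponent.symm_apply_eq.2 rfl⟩
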